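/- arXiv:2512.07607 — 5 statements merged into one kernel-verified Lean document; each statement's English description precedes it below -/
import Mathlib

section
/- Let K be an A-field and Υ a triangular t-module of dimension n over K with diagonal Drinfeld modules ψ_1,…,ψ_n of ranks r_1,…,r_n. Then there exist a finite field extension L of K and a lower triangular matrix V ∈ Mat_n(L{τ}) all of whose diagonal entries equal 1 (so V is invertible in Mat_n(L{τ})) such that V·Υ_t·V^{−1} is again lower triangular with the same diagonal entries ψ_{n,t},…,ψ_{1,t}, and every below-diagonal entry of V·Υ_t·V^{−1} has τ-degree strictly smaller than max(r_i,r_j), where ψ_i is the Drinfeld module occupying the diagonal position of that entry's row and ψ_j the one occupying the diagonal position of that entry's column. -/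
/-!
Conjugating a lower triangular `Υ` by `1 + e E_ab` (`b < a`, inverse `1 - e E_ab`) replaces
`Υ_ab` by `Υ_ab + e Υ_bb - Υ_aa e` and leaves every other entry at distance `≤ a - b` from the
diagonal unchanged. Let `d = deg Υ_ab ≥ R = max (r_a, r_b)` and write `f_R` for the
`τ^R`-coefficient of `f`. For `e = c τ^(d-R)` the `τ^d`-coefficient of the new entry is `P(c)`,
where `P = lc(Υ_ab) + (Υ_bb)_R^(q^(d-R)) X - (Υ_aa)_R X^(q^R)` is non-constant because
`q^R > 1` and one of `(Υ_aa)_R`, `(Υ_bb)_R` is the nonzero leading coefficient. Over an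
algebraically closed field `P` has a root, so `deg Υ_ab` can be pushed below `R`; treating the
entries in order of increasing distance from the diagonal reduces all of them over `K̄`.
The finitely many coefficients of the conjugating matrices generate a finite extension `L/K`
over which everything descends.
-/

open Polynomial Matrix Finset

noncomputable section

/-- Twisted ("skew") multiplication of polynomials in `τ`, determined by the rule
`τ · c = c^q · τ`:  `(Σᵢ aᵢτ^i) · (Σⱼ bⱼτ^j) = Σ_{i,j} aᵢ bⱼ^(q^i) τ^(i+j)`. -/
def twMul {K : Type*} [Field K] (q : ℕ) (f g : Polynomial K) : Polynomial K :=
  f.sum fun i a => g.sum fun j b => Polynomial.C (a * b ^ q ^ i) * Polynomial.X ^ (i + j)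

def twMatMul {K : Type*} [Field K] (q : ℕ) {α β γ : Type*} [Fintype β]
    (A : Matrix α β (Polynomial K)) (B : Matrix β γ (Polynomial K)) :
    Matrix α γ (Polynomial K) :=
  Matrix.of fun i k => ∑ j, twMul q (A i j) (B j k)

/-- `ψ` is (the value at `t` of) a Drinfeld module of rank `r` over the `A`-field `(K, θ)`. -/
def IsDrinfeld {K : Type*} [Field K] (θ : K) (r : ℕ) (ψ : Polynomial K) : Prop :=
  1 ≤ r ∧ ψ.coeff 0 = θ ∧ ψ.natDegree = r ∧ ψ.coeff r ≠ 0

/-- `Υ` is (the value at `t` of) a triangular t-module of dimension `n` with diagonal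
Drinfeld modules `ψ 0 = ψ₁, …, ψ (n-1) = ψₙ` of ranks `r 0, …, r (n-1)`:  `Υ` is lower
triangular and its `(k,k)` diagonal entry is `ψ k.rev` (so `ψₙ` is top-left and
`ψ₁` is bottom-right). -/
def IsTriangular {K : Type*} [Field K] (θ : K) {n : ℕ}
    (Υ : Matrix (Fin n) (Fin n) (Polynomial K))
    (ψ : Fin n → Polynomial K) (r : Fin n → ℕ) : Prop :=
  (∀ i j : Fin n, i < j → Υ i j = 0) ∧
  (∀ k : Fin n, Υ k k = ψ k.rev) ∧
  (∀ i : Fin n, IsDrinfeld θ (r i) (ψ i))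

section TwistedPolynomial

variable {F : Type*} [Field F] {q : ℕ}

@[simp]
theorem twMul_zero (f : F[X]) : twMul q f 0 = 0 := by
  simp [twMul, Polynomial.sum]

@[simp]
theorem zero_twMul (g : F[X]) : twMul q 0 g = 0 := by
  simp [twMul]

theorem ite_zero_twMul (P : Prop) [Decidable P] (f g : F[X]) :
    twMul q (if P then f else 0) g = if P then twMul q f g else 0 := by
  split_ifs <;> simp

theorem twMul_ite_zero (P : Prop) [Decidable P] (f g : F[X]) :
    twMul q f (if P then g else 0) = if P then twMul q f g else 0 := by
  split_ifs <;> simp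

theorem add_twMul (f g h : F[X]) : twMul q (f + g) h = twMul q f h + twMul q g h := by
  refine Polynomial.sum_add_index _ _ _ (fun i => by simp [Polynomial.sum]) fun i a b => ?_
  simp only [← Polynomial.sum_add, add_mul, map_add]

theorem neg_twMul (f g : F[X]) : twMul q (-f) g = -twMul q f g :=
  eq_neg_of_add_eq_zero_left (by rw [← add_twMul, neg_add_cancel, zero_twMul])

theorem sub_twMul (f g h : F[X]) : twMul q (f - g) h = twMul q f h - twMul q g h := by
  rw [sub_eq_add_neg, add_twMul, neg_twMul, ← sub_eq_add_neg]

theorem sum_twMul {ι : Type*} (t : Finset ι) (f : ι → F[X]) (g : F[X]) :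
    twMul q (∑ i ∈ t, f i) g = ∑ i ∈ t, twMul q (f i) g :=
  map_sum (AddMonoidHom.mk' (fun f => twMul q f g) fun f f' => add_twMul f f' g) f t

theorem one_twMul (g : F[X]) : twMul q 1 g = g := by
  rw [twMul, ← monomial_zero_one, sum_monomial_index _ _ (by simp [Polynomial.sum])]
  simpa using g.sum_C_mul_X_pow_eq

theorem map_twMul {G : Type*} [Field G] (ι : F →+* G) (f g : F[X]) :
    (twMul q f g).map ι = twMul q (f.map ι) (g.map ι) := by
  simp [twMul, Polynomial.sum_def, Polynomial.map_sum,
    support_map_of_injective _ ι.injective]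

variable (hq₀ : q ≠ 0)
include hq₀

theorem monomial_twMul_monomial (i j : ℕ) (a b : F) :
    twMul q (monomial i a) (monomial j b) = monomial (i + j) (a * b ^ q ^ i) := by
  rw [twMul, sum_monomial_index, sum_monomial_index, C_mul_X_pow_eq_monomial] <;>
    simp [Polynomial.sum, hq₀]

theorem twMul_one (f : F[X]) : twMul q f 1 = f := by
  induction f using Polynomial.induction_on' with
  | add u v hu hv => rw [add_twMul, hu, hv]
  | monomial i a =>
    rw [← monomial_zero_one, monomial_twMul_monomial hq₀, one_pow, mul_one, add_zero]

theorem coeff_twMul_monomial (f : F[X]) (m : ℕ) (c : F) (k : ℕ) :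
    (twMul q f (monomial m c)).coeff k =
      if m ≤ k then f.coeff (k - m) * c ^ q ^ (k - m) else 0 := by
  induction f using Polynomial.induction_on' with
  | add u v hu hv =>
    simp only [add_twMul, coeff_add, hu, hv]
    split_ifs <;> ring
  | monomial i a =>
    rw [monomial_twMul_monomial hq₀, coeff_monomial, coeff_monomial]
    split_ifs <;> first | rfl | omega | simp_all

end TwistedPolynomial

section Frobenius

variable {F : Type*} [Field F] {p s q : ℕ} [Fact p.Prime] [CharP F p]

theorem ne_zero_of_eq_prime_pow (hq : q = p ^ s) : q ≠ 0 :=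
  hq ▸ pow_ne_zero _ (Fact.out : p.Prime).ne_zero

theorem add_pow_pow_of_eq_prime_pow (hq : q = p ^ s) (i : ℕ) (x y : F) :
    (x + y) ^ q ^ i = x ^ q ^ i + y ^ q ^ i := by
  simpa only [hq, ← pow_mul] using add_pow_char_pow (p := p) x y (n := s * i)

variable (hq : q = p ^ s)
include hq

theorem twMul_add (f g h : F[X]) : twMul q f (g + h) = twMul q f g + twMul q f h := by
  rw [twMul, twMul, twMul, ← Polynomial.sum_add]
  congr 1; funext i a
  refine Polynomial.sum_add_index _ _ _ (fun j => by simp [ne_zero_of_eq_prime_pow hq])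
    fun j b c => ?_
  rw [add_pow_pow_of_eq_prime_pow hq, mul_add, map_add, add_mul]

theorem twMul_neg (f g : F[X]) : twMul q f (-g) = -twMul q f g :=
  eq_neg_of_add_eq_zero_left (by rw [← twMul_add hq, neg_add_cancel, twMul_zero])

theorem twMul_sub (f g h : F[X]) : twMul q f (g - h) = twMul q f g - twMul q f h := by
  rw [sub_eq_add_neg, twMul_add hq, twMul_neg hq, ← sub_eq_add_neg]

theorem twMul_sum {ι : Type*} (t : Finset ι) (f : F[X]) (g : ι → F[X]) :
    twMul q f (∑ i ∈ t, g i) = ∑ i ∈ t, twMul q f (g i) :=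
  map_sum (AddMonoidHom.mk' (twMul q f) (twMul_add hq f)) g t

theorem twMul_assoc (f g h : F[X]) : twMul q (twMul q f g) h = twMul q f (twMul q g h) := by
  have hq₀ := ne_zero_of_eq_prime_pow hq
  induction f using Polynomial.induction_on' with
  | add u v hu hv => rw [add_twMul, add_twMul, add_twMul, hu, hv]
  | monomial i a =>
    induction g using Polynomial.induction_on' with
    | add u v hu hv => rw [twMul_add hq, add_twMul, add_twMul, hu, hv, twMul_add hq]
    | monomial j b =>
      induction h using Polynomial.induction_on' with
      | add u v hu hv => rw [twMul_add hq, twMul_add hq, hu, hv, twMul_add hq]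
      | monomial k c =>
        simp only [monomial_twMul_monomial hq₀, add_assoc, mul_pow, ← pow_mul, ← pow_add,
          mul_assoc, Nat.add_comm j i]

theorem coeff_monomial_twMul (m : ℕ) (c : F) (g : F[X]) (k : ℕ) :
    (twMul q (monomial m c) g).coeff k = if m ≤ k then c * g.coeff (k - m) ^ q ^ m else 0 := by
  have hq₀ := ne_zero_of_eq_prime_pow hq
  induction g using Polynomial.induction_on' with
  | add u v hu hv =>
    simp only [twMul_add hq, coeff_add, hu, hv, add_pow_pow_of_eq_prime_pow hq]
    split_ifs <;> ring
  | monomial j b =>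
    rw [monomial_twMul_monomial hq₀, coeff_monomial, coeff_monomial]
    split_ifs <;> first | rfl | omega | simp [hq₀]

end Frobenius

section TwistedMatrix

variable {F : Type*} [Field F] {q : ℕ} {l m n o : Type*} [Fintype m]

theorem add_twMatMul (A B : Matrix l m F[X]) (C : Matrix m n F[X]) :
    twMatMul q (A + B) C = twMatMul q A C + twMatMul q B C :=
  Matrix.ext fun i k => by simp [twMatMul, add_twMul, Finset.sum_add_distrib]

theorem sub_twMatMul (A B : Matrix l m F[X]) (C : Matrix m n F[X]) :
    twMatMul q (A - B) C = twMatMul q A C - twMatMul q B C :=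
  Matrix.ext fun i k => by simp [twMatMul, sub_twMul, Finset.sum_sub_distrib]

theorem one_twMatMul [DecidableEq m] (A : Matrix m n F[X]) : twMatMul q 1 A = A :=
  Matrix.ext fun i k => by
    simp [twMatMul, Matrix.one_apply, ite_zero_twMul, one_twMul]

theorem twMatMul_one (hq₀ : q ≠ 0) [DecidableEq m] (A : Matrix l m F[X]) :
    twMatMul q A 1 = A :=
  Matrix.ext fun i k => by
    simp [twMatMul, Matrix.one_apply, twMul_ite_zero, twMul_one hq₀]

theorem single_twMatMul [DecidableEq l] [DecidableEq m] (a : l) (b : m) (e : F[X])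
    (A : Matrix m n F[X]) :
    twMatMul q (single a b e) A = of fun i k => if a = i then twMul q e (A b k) else 0 :=
  Matrix.ext fun i k => by
    by_cases h : a = i <;> simp [twMatMul, single_apply, h, ite_zero_twMul]

theorem twMatMul_single [DecidableEq m] [DecidableEq n] (A : Matrix l m F[X]) (a : m) (b : n)
    (e : F[X]) :
    twMatMul q A (single a b e) = of fun i k => if b = k then twMul q (A i a) e else 0 :=
  Matrix.ext fun i k => by
    by_cases h : b = k <;> simp [twMatMul, single_apply, h, twMul_ite_zero]

theorem map_twMatMul {G : Type*} [Field G] (ι : F →+* G) (A : Matrix l m F[X])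
    (B : Matrix m n F[X]) :
    (twMatMul q A B).map (Polynomial.map ι) =
      twMatMul q (A.map (Polynomial.map ι)) (B.map (Polynomial.map ι)) :=
  Matrix.ext fun i k => by simp [twMatMul, Polynomial.map_sum, map_twMul]

variable {p s : ℕ} [Fact p.Prime] [CharP F p] (hq : q = p ^ s)
include hq

theorem twMatMul_add (A : Matrix l m F[X]) (B C : Matrix m n F[X]) :
    twMatMul q A (B + C) = twMatMul q A B + twMatMul q A C :=
  Matrix.ext fun i k => by simp [twMatMul, twMul_add hq, Finset.sum_add_distrib]

theorem twMatMul_sub (A : Matrix l m F[X]) (B C : Matrix m n F[X]) :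
    twMatMul q A (B - C) = twMatMul q A B - twMatMul q A C :=
  Matrix.ext fun i k => by simp [twMatMul, twMul_sub hq, Finset.sum_sub_distrib]

theorem twMatMul_assoc [Fintype n] (A : Matrix l m F[X]) (B : Matrix m n F[X])
    (C : Matrix n o F[X]) :
    twMatMul q (twMatMul q A B) C = twMatMul q A (twMatMul q B C) :=
  Matrix.ext fun i k => by
    simp only [twMatMul, of_apply, sum_twMul, twMul_sum hq, twMul_assoc hq]
    exact Finset.sum_comm

end TwistedMatrix

open OrderDual

theorem Matrix.BlockTriangular.of_map {m R S α : Type*} [Zero R] [Zero S] [LT α] {b : m → α}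
    {f : R → S} (hf : Function.Injective f) (hf₀ : f 0 = 0) {M : Matrix m m R}
    (hM : (M.map f).BlockTriangular b) : M.BlockTriangular b :=
  fun _ _ h => hf (by rw [hf₀]; exact hM h)

section Conjugation

variable {F : Type*} [Field F] {q : ℕ} {m : Type*} [Fintype m]

theorem Matrix.BlockTriangular.twMatMul {α : Type*} [LinearOrder α] {b : m → α}
    {A B : Matrix m m F[X]} (hA : A.BlockTriangular b) (hB : B.BlockTriangular b) :
    (twMatMul q A B).BlockTriangular b := by
  intro i j hij
  refine Finset.sum_eq_zero fun k _ => ?_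
  by_cases hki : b k < b i
  · rw [hA hki, zero_twMul]
  · rw [hB (lt_of_lt_of_le hij (not_lt.mp hki)), twMul_zero]

variable [LinearOrder m]

theorem twMatMul_apply_self_of_lowerTriangular {A B : Matrix m m F[X]}
    (hA : A.BlockTriangular toDual) (hB : B.BlockTriangular toDual) (k : m) :
    twMatMul q A B k k = twMul q (A k k) (B k k) := by
  refine Finset.sum_eq_single k (fun j _ hjk => ?_) (by simp)
  rcases hjk.lt_or_gt with hjk | hjk
  · rw [hB hjk, twMul_zero]
  · rw [hA hjk, zero_twMul]

def IsUnitriangularPair (q : ℕ) (V W : Matrix m m F[X]) : Prop :=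
  V.BlockTriangular toDual ∧ (∀ k, V k k = 1) ∧ twMatMul q V W = 1 ∧ twMatMul q W V = 1

theorem IsUnitriangularPair.one (hq₀ : q ≠ 0) : IsUnitriangularPair q (1 : Matrix m m F[X]) 1 :=
  ⟨blockTriangular_one, fun _ => one_apply_eq _, twMatMul_one hq₀ 1, twMatMul_one hq₀ 1⟩

theorem IsUnitriangularPair.of_map {G : Type*} [Field G] (ι : F →+* G) {V W : Matrix m m F[X]}
    (h : IsUnitriangularPair q (V.map (Polynomial.map ι)) (W.map (Polynomial.map ι))) :
    IsUnitriangularPair q V W := by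
  obtain ⟨hV, hVd, hVW, hWV⟩ := h
  have hinj : Function.Injective (Polynomial.map ι) := map_injective _ ι.injective
  have hinjM := Matrix.map_injective (m := m) (n := m) hinj
  refine ⟨hV.of_map hinj (Polynomial.map_zero ι), fun k => hinj (by simpa using hVd k),
    hinjM ?_, hinjM ?_⟩ <;>
    simpa [map_twMatMul, Matrix.map_one _ (Polynomial.map_zero ι) (Polynomial.map_one ι)]

variable {p s : ℕ} [Fact p.Prime] [CharP F p]

theorem IsUnitriangularPair.twMatMul (hq : q = p ^ s) {V₁ W₁ V₂ W₂ : Matrix m m F[X]}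
    (h₁ : IsUnitriangularPair q V₁ W₁) (h₂ : IsUnitriangularPair q V₂ W₂) :
    IsUnitriangularPair q (twMatMul q V₂ V₁) (twMatMul q W₁ W₂) := by
  obtain ⟨hV₁, hV₁d, hVW₁, hWV₁⟩ := h₁
  obtain ⟨hV₂, hV₂d, hVW₂, hWV₂⟩ := h₂
  have hq₀ := ne_zero_of_eq_prime_pow hq
  refine ⟨hV₂.twMatMul hV₁, fun k => ?_, ?_, ?_⟩
  · rw [twMatMul_apply_self_of_lowerTriangular hV₂ hV₁, hV₂d, hV₁d, one_twMul]
  · rw [twMatMul_assoc hq, ← twMatMul_assoc hq V₁, hVW₁, one_twMatMul, hVW₂]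
  · rw [twMatMul_assoc hq, ← twMatMul_assoc hq W₂, hWV₂, one_twMatMul, hWV₁]

theorem isUnitriangularPair_one_add_single (hq : q = p ^ s) {a b : m} (hba : b < a)
    (e : F[X]) : IsUnitriangularPair q (1 + single a b e) (1 - single a b e) := by
  have hq₀ := ne_zero_of_eq_prime_pow hq
  have hsq : twMatMul q (single a b e) (single a b e) = 0 := by
    rw [single_twMatMul]
    exact Matrix.ext fun i k => by simp [single_apply_of_row_ne hba.ne']
  refine ⟨blockTriangular_one.add (blockTriangular_single hba.le e), fun k => ?_, ?_, ?_⟩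
  · rw [Matrix.add_apply, one_apply_eq,
      single_apply_of_ne _ _ _ _ _ fun h => hba.ne' (h.1.trans h.2.symm), add_zero]
  · simp only [add_twMatMul, twMatMul_sub hq, one_twMatMul, twMatMul_one hq₀, hsq]
    abel
  · simp only [sub_twMatMul, twMatMul_add hq, one_twMatMul, twMatMul_one hq₀, hsq]
    abel

end Conjugation

section TriangularConj

variable {F : Type*} [Field F] {q : ℕ} {m : Type*} [Fintype m] [LinearOrder m]

def IsTriangularConj (q : ℕ) (Υ Υ' : Matrix m m F[X]) : Prop :=
  Υ'.BlockTriangular toDual ∧ Υ'.diag = Υ.diag ∧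
    ∃ V W, IsUnitriangularPair q V W ∧ Υ' = twMatMul q (twMatMul q V Υ) W

theorem IsTriangularConj.refl (hq₀ : q ≠ 0) {Υ : Matrix m m F[X]}
    (hΥ : Υ.BlockTriangular toDual) : IsTriangularConj q Υ Υ :=
  ⟨hΥ, rfl, 1, 1, .one hq₀, by rw [one_twMatMul, twMatMul_one hq₀]⟩

theorem IsTriangularConj.apply_self {Υ Υ' : Matrix m m F[X]} (h : IsTriangularConj q Υ Υ')
    (k : m) : Υ' k k = Υ k k :=
  congrFun h.2.1 k

def elemConj (q : ℕ) (a b : m) (e : F[X]) (Υ : Matrix m m F[X]) : Matrix m m F[X] :=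
  twMatMul q (twMatMul q (1 + single a b e) Υ) (1 - single a b e)

variable {p s : ℕ} [Fact p.Prime] [CharP F p] (hq : q = p ^ s)
include hq

theorem IsTriangularConj.trans {Υ₁ Υ₂ Υ₃ : Matrix m m F[X]} (h₁ : IsTriangularConj q Υ₁ Υ₂)
    (h₂ : IsTriangularConj q Υ₂ Υ₃) : IsTriangularConj q Υ₁ Υ₃ := by
  obtain ⟨-, hd₁, V₁, W₁, hP₁, rfl⟩ := h₁
  obtain ⟨ht₂, hd₂, V₂, W₂, hP₂, rfl⟩ := h₂
  exact ⟨ht₂, hd₂.trans hd₁, _, _, hP₁.twMatMul hq hP₂, by simp only [twMatMul_assoc hq]⟩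

theorem elemConj_apply {Υ : Matrix m m F[X]} {a b : m} (hΥ : Υ b a = 0) (e : F[X]) (i j : m) :
    elemConj q a b e Υ i j = Υ i j + (if a = i then twMul q e (Υ b j) else 0)
      - (if b = j then twMul q (Υ i a) e else 0) := by
  simp [elemConj, add_twMatMul, twMatMul_sub hq, one_twMatMul,
    twMatMul_one (ne_zero_of_eq_prime_pow hq), single_twMatMul, twMatMul_single, hΥ]

theorem elemConj_apply_eq_self {Υ : Matrix m m F[X]} {a b : m} (hΥ : Υ b a = 0) (e : F[X])
    {i j : m} (hrow : a = i → Υ b j = 0) (hcol : b = j → Υ i a = 0) :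
    elemConj q a b e Υ i j = Υ i j := by
  rw [elemConj_apply hq hΥ, ite_eq_right_iff.mpr fun hi => by rw [hrow hi, twMul_zero],
    ite_eq_right_iff.mpr fun hj => by rw [hcol hj, zero_twMul], add_zero, sub_zero]

theorem isTriangularConj_elemConj {Υ : Matrix m m F[X]} (hΥ : Υ.BlockTriangular toDual)
    {a b : m} (hba : b < a) (e : F[X]) : IsTriangularConj q Υ (elemConj q a b e Υ) := by
  refine ⟨fun i j (hij : i < j) => ?_, funext fun k => ?_,
    _, _, isUnitriangularPair_one_add_single hq hba e, rfl⟩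
  · rw [elemConj_apply_eq_self hq (hΥ hba) e (fun hi => hΥ (hba.trans (hi ▸ hij)))
      fun hj => hΥ ((hj ▸ hij).trans hba), hΥ hij]
  · exact elemConj_apply_eq_self hq (hΥ hba) e (fun h => h ▸ hΥ hba) fun h => h ▸ hΥ hba

end TriangularConj

def IsReducedAt {F : Type*} [Field F] {m : Type*} (Υ : Matrix m m F[X]) (a b : m) : Prop :=
  (Υ a b).natDegree < max (Υ a a).natDegree (Υ b b).natDegree

theorem isReducedAt_map_iff {F G : Type*} [Field F] [Field G] {m : Type*} (ι : F →+* G)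
    (Υ : Matrix m m F[X]) (a b : m) :
    IsReducedAt (Υ.map (Polynomial.map ι)) a b ↔ IsReducedAt Υ a b := by
  simp [IsReducedAt]

section Reduction

variable {F : Type*} [Field F] [IsAlgClosed F]

theorem exists_add_mul_sub_mul_pow_eq_zero (a : F) {b c : F} {N : ℕ} (hN : 1 < N)
    (hbc : b ≠ 0 ∨ c ≠ 0) : ∃ x, a + b * x - c * x ^ N = 0 := by
  have hP : (C a + C b * X - C c * X ^ N).degree ≠ 0 := by
    refine (natDegree_pos_iff_degree_pos.mp ?_).ne'
    rcases hbc with h | h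
    · refine one_pos.trans_le (le_natDegree_of_ne_zero (n := 1) ?_)
      simpa [coeff_C, coeff_X, hN.ne] using h
    · refine (zero_lt_one.trans hN).trans_le (le_natDegree_of_ne_zero (n := N) ?_)
      simpa [coeff_C, coeff_X, hN.ne, (zero_lt_one.trans hN).ne'] using h
  obtain ⟨x, hx⟩ := IsAlgClosed.exists_root _ hP
  exact ⟨x, by simpa using hx⟩

variable {p s q : ℕ} [Fact p.Prime] [CharP F p] {n : ℕ}

theorem exists_natDegree_add_twMul_sub_twMul_lt (hs : 0 < s) (hq : q = p ^ s) {φ ρ δ : F[X]}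
    (hpos : 0 < max φ.natDegree ρ.natDegree) (hle : max φ.natDegree ρ.natDegree ≤ δ.natDegree) :
    ∃ e, (δ + twMul q e ρ - twMul q φ e).natDegree < δ.natDegree := by
  generalize hR : max φ.natDegree ρ.natDegree = R at hpos hle
  set d := δ.natDegree
  set m := d - R
  have hq₀ := ne_zero_of_eq_prime_pow hq
  have hq₁ : 1 < q := hq ▸ Nat.one_lt_pow hs.ne' (Fact.out : p.Prime).one_lt
  have hqR : 1 < q ^ R := Nat.one_lt_pow hpos.ne' hq₁
  have hlead : φ.coeff R ≠ 0 ∨ ρ.coeff R ≠ 0 := by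
    have coeff_ne (f : F[X]) (hf : f.natDegree = R) : f.coeff R ≠ 0 := by
      rw [← hf, coeff_natDegree, leadingCoeff_ne_zero]
      rintro rfl
      simp [← hf] at hpos
    rcases max_choice φ.natDegree ρ.natDegree with h | h
    exacts [.inl (coeff_ne φ (h.symm.trans hR)), .inr (coeff_ne ρ (h.symm.trans hR))]
  obtain ⟨c, hc⟩ := exists_add_mul_sub_mul_pow_eq_zero (δ.coeff d) hqR
    (hlead.symm.imp (pow_ne_zero (q ^ m)) id)
  refine ⟨monomial m c, lt_of_le_of_lt (natDegree_le_iff_coeff_eq_zero.mpr fun k hk => ?_)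
    (Nat.sub_lt (hpos.trans_le hle) one_pos : d - 1 < d)⟩
  rw [coeff_sub, coeff_add, coeff_monomial_twMul hq, coeff_twMul_monomial hq₀, if_pos (by omega),
    if_pos (by omega)]
  rcases (show d ≤ k by omega).eq_or_lt with rfl | hdk
  · rw [show δ.natDegree - m = R by omega]
    linear_combination hc
  · rw [coeff_eq_zero_of_natDegree_lt hdk,
      coeff_eq_zero_of_natDegree_lt (by omega : ρ.natDegree < k - m),
      coeff_eq_zero_of_natDegree_lt (by omega : φ.natDegree < k - m)]
    simp [hq₀]

theorem exists_isTriangularConj_isReducedAt (hs : 0 < s) (hq : q = p ^ s)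
    {Υ : Matrix (Fin n) (Fin n) F[X]} (hΥ : Υ.BlockTriangular toDual)
    (hdiag : ∀ k, 0 < (Υ k k).natDegree) {a b : Fin n} (hba : b < a) :
    ∃ Υ', IsTriangularConj q Υ Υ' ∧ IsReducedAt Υ' a b ∧
      ∀ i j : Fin n, (i, j) ≠ (a, b) → (i : ℕ) - j ≤ a - b → Υ' i j = Υ i j := by
  induction hN : (Υ a b).natDegree using Nat.strong_induction_on generalizing Υ with
  | _ N ih =>
  by_cases hred : IsReducedAt Υ a b
  · exact ⟨Υ, .refl (ne_zero_of_eq_prime_pow hq) hΥ, hred, fun _ _ _ _ => rfl⟩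
  obtain ⟨e, he⟩ := exists_natDegree_add_twMul_sub_twMul_lt hs hq
    ((hdiag a).trans_le (le_max_left _ _)) (not_lt.mp hred)
  have h₁ := isTriangularConj_elemConj hq hΥ hba e
  have hkeep : ∀ i j : Fin n, (i, j) ≠ (a, b) → (i : ℕ) - j ≤ a - b →
      elemConj q a b e Υ i j = Υ i j := by
    intro i j hij hdist
    have hba' : (b : ℕ) < a := hba
    refine elemConj_apply_eq_self hq (hΥ hba) e (fun hi => hΥ ?_) fun hj => hΥ ?_
    · subst hi
      have := Fin.val_ne_of_ne fun h : j = b => hij (h ▸ rfl)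
      show b < j
      omega
    · subst hj
      have := Fin.val_ne_of_ne fun h : i = a => hij (h ▸ rfl)
      show i < a
      omega
  have hlt : (elemConj q a b e Υ a b).natDegree < N := by
    rwa [← hN, elemConj_apply hq (hΥ hba), if_pos rfl, if_pos rfl]
  obtain ⟨Υ₂, h₂, hred₂, hkeep₂⟩ := ih _ hlt h₁.1 (fun k => h₁.apply_self k ▸ hdiag k) rfl
  exact ⟨Υ₂, h₁.trans hq h₂, hred₂, fun i j hij hdist =>
    (hkeep₂ i j hij hdist).trans (hkeep i j hij hdist)⟩

theorem exists_isTriangularConj_forall_isReducedAt (hs : 0 < s) (hq : q = p ^ s)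
    {Υ : Matrix (Fin n) (Fin n) F[X]} (hΥ : Υ.BlockTriangular toDual)
    (hdiag : ∀ k, 0 < (Υ k k).natDegree) :
    ∃ Υ', IsTriangularConj q Υ Υ' ∧ ∀ a b, b < a → IsReducedAt Υ' a b := by
  classical
  suffices ∀ S : Finset (Fin n × Fin n),
      ∃ Υ', IsTriangularConj q Υ Υ' ∧ ∀ x ∈ S, x.2 < x.1 → IsReducedAt Υ' x.1 x.2 by
    obtain ⟨Υ', h, hred⟩ := this Finset.univ
    exact ⟨Υ', h, fun a b hba => hred (a, b) (Finset.mem_univ _) hba⟩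
  intro S
  refine Finset.induction_on_max_value (fun x : Fin n × Fin n => (x.1 : ℕ) - x.2) S
    ⟨Υ, .refl (ne_zero_of_eq_prime_pow hq) hΥ, by simp⟩ fun x S hxS hmax ih => ?_
  obtain ⟨Υ₁, h₁, hred₁⟩ := ih
  obtain ⟨a, b⟩ := x
  by_cases hba : b < a
  · obtain ⟨Υ₂, h₂, hred₂, hkeep⟩ := exists_isTriangularConj_isReducedAt hs hq h₁.1
      (fun k => h₁.apply_self k ▸ hdiag k) hba
    refine ⟨Υ₂, h₁.trans hq h₂, Finset.forall_mem_insert _ _ _ |>.mpr ⟨fun _ => hred₂, ?_⟩⟩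
    intro y hy hy'
    have hne : y ≠ (a, b) := fun h => hxS (h ▸ hy)
    unfold IsReducedAt
    rw [hkeep _ _ hne (hmax y hy), h₂.apply_self, h₂.apply_self]
    exact hred₁ y hy hy'
  · exact ⟨Υ₁, h₁, Finset.forall_mem_insert _ _ _ |>.mpr ⟨fun h => absurd h hba, hred₁⟩⟩

end Reduction

section Descent

theorem exists_finiteDimensional_forall_mem_lifts {K F : Type*} [Field K] [Field F] [Algebra K F]
    [Algebra.IsAlgebraic K F] {ι : Type*} [Finite ι] (f : ι → F[X]) :
    ∃ L : IntermediateField K F, FiniteDimensional K L ∧ ∀ i, f i ∈ lifts (algebraMap L F) := by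
  refine ⟨IntermediateField.adjoin K (⋃ i, ((f i).coeffs : Set F)),
    IntermediateField.finiteDimensional_adjoin fun x _ =>
      (Algebra.IsAlgebraic.isAlgebraic x).isIntegral,
    fun i => (lifts_iff_coeff_lifts _).mpr fun k => ?_⟩
  by_cases hk : (f i).coeff k = 0
  · exact ⟨0, by simp [hk]⟩
  · exact ⟨⟨_, IntermediateField.subset_adjoin _ _ (Set.mem_iUnion.mpr ⟨i, coeff_mem_coeffs hk⟩)⟩,
      rfl⟩

theorem Matrix.exists_map_eq_of_forall_mem_lifts {R S : Type*} [Semiring R] [Semiring S]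
    {f : R →+* S} {m n : Type*} (M : Matrix m n S[X]) (h : ∀ i j, M i j ∈ lifts f) :
    ∃ N : Matrix m n R[X], N.map (Polynomial.map f) = M := by
  choose N hN using fun i j => (mem_lifts _).mp (h i j)
  exact ⟨Matrix.of N, Matrix.ext hN⟩

theorem IsUnitriangularPair.exists_descent {K F : Type*} [Field K] [Field F] [Algebra K F]
    [Algebra.IsAlgebraic K F] {m : Type*} [Fintype m] [LinearOrder m] {q : ℕ}
    {V W : Matrix m m F[X]} (h : IsUnitriangularPair q V W) :
    ∃ L : IntermediateField K F, FiniteDimensional K L ∧ ∃ VL WL : Matrix m m L[X],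
      IsUnitriangularPair q VL WL ∧ VL.map (map (algebraMap L F)) = V ∧
        WL.map (map (algebraMap L F)) = W := by
  obtain ⟨L, hL, hlifts⟩ :=
    exists_finiteDimensional_forall_mem_lifts (K := K) (Sum.elim V.uncurry W.uncurry)
  obtain ⟨VL, rfl⟩ := V.exists_map_eq_of_forall_mem_lifts fun i j => hlifts (.inl (i, j))
  obtain ⟨WL, rfl⟩ := W.exists_map_eq_of_forall_mem_lifts fun i j => hlifts (.inr (i, j))
  exact ⟨L, hL, VL, WL, h.of_map _, rfl, rfl⟩

end Descent

/-- Theorem on the reduced form of a triangular t-module.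
For a triangular t-module `Υ` over an `A`-field `K` there exist a finite field extension
`L/K` and a lower triangular matrix `V` over `L{τ}` with all diagonal entries `1`
(invertible, with two–sided twisted inverse `W`) such that `V·Υ_t·V⁻¹` is again lower
triangular with the same diagonal entries, and every below-diagonal entry of `V·Υ_t·V⁻¹`
has `τ`-degree strictly smaller than `max (rᵢ, rⱼ)`, where `ψᵢ` occupies the diagonal
position of that entry's row, and `ψⱼ` that of its column. -/
theorem reduced_form_exists
    {K : Type*} [Field K] (p s q : ℕ) [Fact p.Prime] (hs : 0 < s) (hq : q = p ^ s)
    [Algebra (GaloisField p s) K] (θ : K) {n : ℕ}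
    (Υ : Matrix (Fin n) (Fin n) (Polynomial K))
    (ψ : Fin n → Polynomial K) (r : Fin n → ℕ)
    (hΥ : IsTriangular θ Υ ψ r) :
    ∃ L : IntermediateField K (AlgebraicClosure K), FiniteDimensional K L ∧
      ∃ V W : Matrix (Fin n) (Fin n) (Polynomial L),
        (∀ i j : Fin n, i < j → V i j = 0) ∧
        (∀ k : Fin n, V k k = 1) ∧
        twMatMul q V W = 1 ∧ twMatMul q W V = 1 ∧
        ∃ Υ' : Matrix (Fin n) (Fin n) (Polynomial L),
          Υ' = twMatMul q (twMatMul q V (Υ.map (Polynomial.map (algebraMap K L)))) W ∧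
          (∀ i j : Fin n, i < j → Υ' i j = 0) ∧
          (∀ k : Fin n, Υ' k k = (ψ k.rev).map (algebraMap K L)) ∧
          (∀ a b : Fin n, b < a →
            (Υ' a b).natDegree < max (r a.rev) (r b.rev)) := by
  have : CharP K p := charP_of_injective_algebraMap (algebraMap (GaloisField p s) K).injective p
  set F := AlgebraicClosure K
  have : CharP F p := charP_of_injective_algebraMap (algebraMap K F).injective p
  obtain ⟨hΥtri, hΥdiag, hψ⟩ := hΥ
  have hdeg (k : Fin n) : (Υ k k).natDegree = r k.rev := hΥdiag k ▸ (hψ k.rev).2.2.1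
  obtain ⟨_, ⟨htri, hdiag, V, W, hpair, rfl⟩, hred⟩ :=
    exists_isTriangularConj_forall_isReducedAt (F := F) hs hq (Υ := Υ.map (map (algebraMap K F)))
      (fun i j (h : i < j) => by simp [hΥtri i j h])
      fun k => by rw [Matrix.map_apply, natDegree_map, hdeg]; exact (hψ k.rev).1
  obtain ⟨L, hL, VL, WL, ⟨hV, hVd, hVW, hWV⟩, rfl, rfl⟩ := hpair.exists_descent (K := K)
  set Υ' := twMatMul q (twMatMul q VL (Υ.map (map (algebraMap K L)))) WL
  have hmap : Υ'.map (map (algebraMap L F)) =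
      twMatMul q (twMatMul q (VL.map (map (algebraMap L F))) (Υ.map (map (algebraMap K F))))
        (WL.map (map (algebraMap L F))) := by
    rw [map_twMatMul, map_twMatMul]
    congr 2
    exact Matrix.ext fun i j => by simp [Polynomial.map_map, ← IsScalarTower.algebraMap_eq]
  rw [← hmap] at htri hdiag hred
  have hinj : Function.Injective (map (algebraMap L F)) :=
    map_injective _ (algebraMap L F).injective
  have hdiag' (k : Fin n) : Υ' k k = (ψ k.rev).map (algebraMap K L) := hinj <| by
    simpa [hΥdiag, Polynomial.map_map, ← IsScalarTower.algebraMap_eq] using congrFun hdiag k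
  refine ⟨L, hL, VL, WL, fun i j h => hV h, hVd, hVW, hWV, Υ', rfl,
    fun i j h => htri.of_map hinj (Polynomial.map_zero _) h,
    hdiag', fun a b hba => ?_⟩
  have h := (isReducedAt_map_iff _ _ a b).mp (hred a b hba)
  rwa [IsReducedAt, hdiag', hdiag', natDegree_map, natDegree_map, ← hΥdiag, ← hΥdiag, hdeg,
    hdeg] at h
end
end

section
/- Let K be an A-field and Υ a triangular t-module of dimension n over K with diagonal Drinfeld modules ψ_1,…,ψ_n of ranks r_1,…,r_n. Then: (a) if Υ is almost strictly pure, i.e. there exists m ≥ 1 such that the leading coefficient matrix of (Υ_t)^m (the entrywise matrix of coefficients of τ^{s_m}, where s_m is the maximal τ-degree of the entries of (Υ_t)^m) is invertible, then r_1 = r_2 = ⋯ = r_n; (b) conversely, if r_1 = ⋯ = r_n = r and every below-diagonal entry of Υ_t has τ-degree at most r, then deg_τ Υ_t = r and the leading coefficient matrix of Υ_t is invertible, i.e. Υ is strictly pure (in particular almost strictly pure). -/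
open Polynomial Matrix Finset

noncomputable section

/-- Twisted power of a square matrix of twisted polynomials:  `(Υ_t)^m = Υ_{t^m}`. -/
def twMatPow {K : Type*} [Field K] (q : ℕ) {n : ℕ}
    (A : Matrix (Fin n) (Fin n) (Polynomial K)) : ℕ → Matrix (Fin n) (Fin n) (Polynomial K)
  | 0 => 1
  | m + 1 => twMatMul q (twMatPow q A m) A

/-- Twisted power of a single twisted polynomial. -/
def twPow (q : ℕ) {K : Type*} [Field K] (f : Polynomial K) : ℕ → Polynomial K
  | 0 => 1
  | m + 1 => twMul q (twPow q f m) f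

section aux
variable {K : Type*} [Field K] (q : ℕ)

lemma twMul_def (f g : Polynomial K) :
    twMul q f g = ∑ i ∈ f.support, ∑ j ∈ g.support,
      Polynomial.C (f.coeff i * g.coeff j ^ q ^ i) * Polynomial.X ^ (i + j) := by
  simp [twMul, Polynomial.sum]

lemma twMul_zero_left (g : Polynomial K) : twMul q 0 g = 0 := by
  simp [twMul_def]

lemma twMul_zero_right (f : Polynomial K) : twMul q f 0 = 0 := by
  simp [twMul_def]

lemma natDegree_twMul_le (f g : Polynomial K) :
    (twMul q f g).natDegree ≤ f.natDegree + g.natDegree := by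
  rw [twMul_def]
  refine natDegree_sum_le_of_forall_le _ _ fun i hi => ?_
  refine natDegree_sum_le_of_forall_le _ _ fun j hj => ?_
  refine (natDegree_C_mul_le _ _).trans ?_
  simpa using Nat.add_le_add (le_natDegree_of_mem_supp _ hi) (le_natDegree_of_mem_supp _ hj)

lemma coeff_twMul_top (hq0 : q ≠ 0) (f g : Polynomial K) :
    (twMul q f g).coeff (f.natDegree + g.natDegree)
      = f.leadingCoeff * g.leadingCoeff ^ q ^ f.natDegree := by
  rcases eq_or_ne f 0 with rfl | hf
  · simp [twMul_zero_left]
  rcases eq_or_ne g 0 with rfl | hg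
  · simp [twMul_zero_right, zero_pow (pow_ne_zero _ hq0)]
  rw [twMul_def]
  rw [finset_sum_coeff]
  rw [Finset.sum_eq_single f.natDegree]
  · rw [finset_sum_coeff, Finset.sum_eq_single g.natDegree]
    · rw [coeff_C_mul, coeff_X_pow, if_pos rfl, mul_one]; rfl
    · intro j hj hjne
      have hjle := le_natDegree_of_mem_supp _ hj
      rw [coeff_C_mul, coeff_X_pow, if_neg (by omega), mul_zero]
    · intro h
      exact absurd (natDegree_mem_support_of_nonzero hg) h
  · intro i hi hine
    have hile := le_natDegree_of_mem_supp _ hi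
    rw [finset_sum_coeff]
    refine Finset.sum_eq_zero fun j hj => ?_
    have hjle := le_natDegree_of_mem_supp _ hj
    rw [coeff_C_mul, coeff_X_pow, if_neg (by omega), mul_zero]
  · intro h
    exact absurd (natDegree_mem_support_of_nonzero hf) h

lemma twPow_natDegree_coeff (hq0 : q ≠ 0) (f : Polynomial K) (hf : f ≠ 0) (m : ℕ) :
    (twPow q f m).natDegree = m * f.natDegree ∧
      (twPow q f m).coeff (m * f.natDegree) ≠ 0 := by
  induction m with
  | zero => simp [twPow]
  | succ m ih =>
    obtain ⟨hdeg, hc⟩ := ih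
    have hlg : (twPow q f m).leadingCoeff ≠ 0 := by
      rwa [leadingCoeff, hdeg]
    have hlf : f.leadingCoeff ≠ 0 := leadingCoeff_ne_zero.mpr hf
    have htop : (twPow q f (m+1)).coeff ((twPow q f m).natDegree + f.natDegree)
        = (twPow q f m).leadingCoeff * f.leadingCoeff ^ q ^ (twPow q f m).natDegree :=
      coeff_twMul_top q hq0 _ _
    have hne : (twPow q f (m+1)).coeff ((twPow q f m).natDegree + f.natDegree) ≠ 0 := by
      rw [htop]
      exact mul_ne_zero hlg (pow_ne_zero _ hlf)
    have hle : (twPow q f (m+1)).natDegree ≤ (twPow q f m).natDegree + f.natDegree :=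
      natDegree_twMul_le q _ _
    have hge := le_natDegree_of_ne_zero hne
    have heq : (twPow q f (m+1)).natDegree = (twPow q f m).natDegree + f.natDegree :=
      le_antisymm hle hge
    constructor
    · rw [heq, hdeg]; ring
    · rw [(by rw [hdeg]; ring : (m+1) * f.natDegree = (twPow q f m).natDegree + f.natDegree)]
      exact hne

lemma twMatPow_triangular {n : ℕ} (A : Matrix (Fin n) (Fin n) (Polynomial K))
    (hA : ∀ i j : Fin n, i < j → A i j = 0) (m : ℕ) :
    (∀ i j : Fin n, i < j → twMatPow q A m i j = 0) ∧
      (∀ k : Fin n, twMatPow q A m k k = twPow q (A k k) m) := by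
  induction m with
  | zero =>
    constructor
    · intro i j hij
      simp [twMatPow, Matrix.one_apply, Fin.ne_of_lt hij]
    · intro k; simp [twMatPow, twPow]
  | succ m ih =>
    obtain ⟨ih1, ih2⟩ := ih
    constructor
    · intro i j hij
      show (∑ l, twMul q (twMatPow q A m i l) (A l j)) = 0
      refine Finset.sum_eq_zero fun l _ => ?_
      rcases lt_or_ge i l with h | h
      · rw [ih1 i l h, twMul_zero_left]
      · rw [hA l j (lt_of_le_of_lt h hij), twMul_zero_right]
    · intro k
      show (∑ l, twMul q (twMatPow q A m k l) (A l k)) = twPow q (A k k) (m+1)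
      rw [Finset.sum_eq_single k]
      · rw [ih2 k]; rfl
      · intro l _ hlk
        rcases lt_or_gt_of_ne hlk with h | h
        · rw [hA l k h, twMul_zero_right]
        · rw [ih1 k l h, twMul_zero_left]
      · intro h; exact absurd (Finset.mem_univ k) h

lemma isUnit_of_lowerTriangular_diag_ne {n : ℕ} (M : Matrix (Fin n) (Fin n) K)
    (hlt : ∀ i j : Fin n, i < j → M i j = 0) (hdiag : ∀ k, M k k ≠ 0) : IsUnit M := by
  rw [Matrix.isUnit_iff_isUnit_det, Matrix.det_of_lowerTriangular M
    (fun i j h => hlt i j (by simpa using h))]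
  rw [isUnit_iff_ne_zero]
  exact Finset.prod_ne_zero_iff.mpr fun k _ => hdiag k

lemma diag_ne_of_isUnit_lowerTriangular {n : ℕ} (M : Matrix (Fin n) (Fin n) K)
    (hlt : ∀ i j : Fin n, i < j → M i j = 0) (h : IsUnit M) : ∀ k, M k k ≠ 0 := by
  rw [Matrix.isUnit_iff_isUnit_det, Matrix.det_of_lowerTriangular M
    (fun i j hij => hlt i j (by simpa using hij)), isUnit_iff_ne_zero] at h
  exact fun k => Finset.prod_ne_zero_iff.mp h k (Finset.mem_univ k)

end aux

/-- almost strict purity and strict purity for triangular t-modules.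
(a) If `Υ` is almost strictly pure, i.e. for some `m ≥ 1` the leading coefficient matrix
of `(Υ_t)^m` (the entrywise matrix of coefficients of `τ^{s_m}`, where `s_m` is the
maximal `τ`-degree of the entries of `(Υ_t)^m`) is invertible, then all ranks `rᵢ` are
equal.  (b) Conversely, if all ranks are equal to `r₀` and every below-diagonal entry of
`Υ_t` has `τ`-degree at most `r₀`, then `deg_τ Υ_t = r₀` and the leading coefficient
matrix of `Υ_t` is invertible, i.e. `Υ` is strictly pure. -/


theorem almost_strictly_pure_characterisation
    {K : Type*} [Field K] (p s q : ℕ) [Fact p.Prime] (hs : 0 < s) (hq : q = p ^ s)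
    [Algebra (GaloisField p s) K] (θ : K) {n : ℕ} (hn : 0 < n)
    (Υ : Matrix (Fin n) (Fin n) (Polynomial K))
    (ψ : Fin n → Polynomial K) (r : Fin n → ℕ)
    (hΥ : IsTriangular θ Υ ψ r) :
    ((∃ m : ℕ, 1 ≤ m ∧
        IsUnit (Matrix.of fun a b : Fin n =>
          ((twMatPow q Υ m) a b).coeff
            (Finset.univ.sup fun ab : Fin n × Fin n =>
              ((twMatPow q Υ m) ab.1 ab.2).natDegree))) →
      ∀ i j : Fin n, r i = r j) ∧
    (∀ r₀ : ℕ, (∀ i : Fin n, r i = r₀) →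
      (∀ a b : Fin n, b < a → (Υ a b).natDegree ≤ r₀) →
      (Finset.univ.sup fun ab : Fin n × Fin n => (Υ ab.1 ab.2).natDegree) = r₀ ∧
        IsUnit (Matrix.of fun a b : Fin n => (Υ a b).coeff r₀)) := by
  obtain ⟨hlow, hdiag, hdrin⟩ := hΥ
  have hq0 : q ≠ 0 := by
    subst hq; exact pow_ne_zero _ (Nat.Prime.pos Fact.out).ne'
  have hψne : ∀ i : Fin n, ψ i ≠ 0 := by
    intro i h
    exact (hdrin i).2.2.2 (by simp [h])
  have hψdeg : ∀ i : Fin n, (ψ i).natDegree = r i := fun i => (hdrin i).2.2.1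
  constructor
  · rintro ⟨m, hm, hunit⟩ i j
    set P := twMatPow q Υ m with hP
    set s₀ := Finset.univ.sup fun ab : Fin n × Fin n => (P ab.1 ab.2).natDegree with hs₀
    obtain ⟨hPlow, hPdiag⟩ := twMatPow_triangular q Υ hlow m
    rw [← hP] at hPlow hPdiag
    have hLlow : ∀ a b : Fin n, a < b →
        (Matrix.of fun a b : Fin n => (P a b).coeff s₀) a b = 0 := by
      intro a b hab
      simp only [Matrix.of_apply]
      rw [hPlow a b hab, Polynomial.coeff_zero]
    have hdne := diag_ne_of_isUnit_lowerTriangular _ hLlow hunit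
    have key : ∀ k : Fin n, m * r k.rev = s₀ := by
      intro k
      have h1 : P k k = twPow q (Υ k k) m := hPdiag k
      have h2 : (P k k).natDegree = m * r k.rev ∧
          (P k k).coeff (m * r k.rev) ≠ 0 := by
        rw [h1, hdiag k]
        rw [← hψdeg k.rev]
        exact twPow_natDegree_coeff q hq0 _ (hψne k.rev) m
      have hge : m * r k.rev ≤ s₀ := by
        rw [← h2.1]
        exact Finset.le_sup (f := fun ab : Fin n × Fin n => (P ab.1 ab.2).natDegree)
          (Finset.mem_univ (k, k))
      have hle : s₀ ≤ m * r k.rev := by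
        have := hdne k
        simp only [Matrix.of_apply] at this
        rw [← h2.1]
        exact Polynomial.le_natDegree_of_ne_zero this
      omega
    have hi := key i.rev
    have hj := key j.rev
    rw [Fin.rev_rev] at hi hj
    have : m * r i = m * r j := by rw [hi, hj]
    exact Nat.eq_of_mul_eq_mul_left hm this
  · intro r₀ hr hbelow
    have hdd : ∀ k : Fin n, (Υ k k).natDegree = r₀ := by
      intro k
      rw [hdiag k, hψdeg k.rev, hr k.rev]
    have hsup : (Finset.univ.sup fun ab : Fin n × Fin n => (Υ ab.1 ab.2).natDegree) = r₀ := by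
      apply le_antisymm
      · refine Finset.sup_le fun ab _ => ?_
        rcases lt_trichotomy ab.1 ab.2 with h | h | h
        · rw [hlow ab.1 ab.2 h]; simp
        · rw [show ab.2 = ab.1 from h.symm, hdd]
        · exact hbelow ab.1 ab.2 h
      · have k : Fin n := ⟨0, hn⟩
        calc r₀ = (Υ k k).natDegree := (hdd k).symm
        _ ≤ _ := Finset.le_sup (f := fun ab : Fin n × Fin n => (Υ ab.1 ab.2).natDegree)
            (Finset.mem_univ (k, k))
    refine ⟨hsup, ?_⟩
    apply isUnit_of_lowerTriangular_diag_ne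
    · intro a b hab
      simp only [Matrix.of_apply]
      rw [hlow a b hab, Polynomial.coeff_zero]
    · intro k
      simp only [Matrix.of_apply]
      rw [hdiag k]
      have := (hdrin k.rev).2.2.2
      rwa [hr k.rev] at this
end
end

section
/- Let K be an A-field and let Υ and Υ̂ be triangular t-modules of the same dimension n over K, with diagonal Drinfeld modules ψ_1,…,ψ_n and ψ̂_1,…,ψ̂_n respectively. Assume that for all i ≠ j one has Hom_τ(ψ_i, ψ̂_j) = 0 (i.e. ψ_i and ψ̂_j are non-isogenous). Then every morphism V : Υ → Υ̂, i.e. every matrix V ∈ Mat_n(K{τ}) with V·Υ_t = Υ̂_t·V, is lower triangular; moreover each diagonal entry v_k := V_{k,k} satisfies v_k·ψ_{n+1−k,t} = ψ̂_{n+1−k,t}·v_k, i.e. is a morphism of Drinfeld modules ψ_{n+1−k} → ψ̂_{n+1−k}. -/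
open Polynomial Matrix Finset

noncomputable section

/-- every morphism between triangular t-modules with pairwise
non-isogenous off-diagonal sub-quotients is triangular.  If `Hom_τ(ψ_i, ψ̂_j) = 0` for
all `i ≠ j`, then every morphism `V : Υ → Υ̂` is lower triangular, and each diagonal
entry `v_k = V k k` is a morphism of Drinfeld modules `ψ_{k.rev} → ψ̂_{k.rev}`. -/
theorem morphisms_are_triangular
    {K : Type*} [Field K] (p s q : ℕ) [Fact p.Prime] (hs : 0 < s) (hq : q = p ^ s)
    [Algebra (GaloisField p s) K] (θ : K) {n : ℕ}
    (Υ : Matrix (Fin n) (Fin n) (Polynomial K))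
    (ψ : Fin n → Polynomial K) (r : Fin n → ℕ)
    (hΥ : IsTriangular θ Υ ψ r)
    (Υ' : Matrix (Fin n) (Fin n) (Polynomial K))
    (ψ' : Fin n → Polynomial K) (r' : Fin n → ℕ)
    (hΥ' : IsTriangular θ Υ' ψ' r')
    (hnoniso : ∀ i j : Fin n, i ≠ j →
      ∀ u : Polynomial K, twMul q u (ψ i) = twMul q (ψ' j) u → u = 0) :
    ∀ V : Matrix (Fin n) (Fin n) (Polynomial K),
      twMatMul q V Υ = twMatMul q Υ' V →
      (∀ a b : Fin n, a < b → V a b = 0) ∧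
      (∀ k : Fin n, twMul q (V k k) (ψ k.rev) = twMul q (ψ' k.rev) (V k k)) := by

  obtain ⟨hΥlt, hΥdiag, hΥdr⟩ := hΥ
  obtain ⟨hΥ'lt, hΥ'diag, hΥ'dr⟩ := hΥ'
  intro V hV
  have hentry : ∀ a b : Fin n,
      ∑ j, twMul q (V a j) (Υ j b) = ∑ j, twMul q (Υ' a j) (V j b) := by
    intro a b
    simpa [twMatMul] using congrFun (congrFun hV a) b
  have tz1 : ∀ g : Polynomial K, twMul q 0 g = 0 := by intro g; simp [twMul]
  have tz2 : ∀ f : Polynomial K, twMul q f 0 = 0 := by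
    intro f; simp only [twMul, Polynomial.sum_zero_index]; simp [Polynomial.sum]
  have key : ∀ m : ℕ, ∀ a b : Fin n, a < b → n ≤ m + (b.val - a.val) → V a b = 0 := by
    intro m
    induction m with
    | zero =>
      intro a b hab hle
      have := b.isLt
      omega
    | succ m ih =>
      intro a b hab hle
      have hab' : a.val < b.val := hab
      have hL : ∑ j, twMul q (V a j) (Υ j b) = twMul q (V a b) (ψ b.rev) := by
        rw [Finset.sum_eq_single b]
        · rw [hΥdiag b]
        · intro j _ hj
          rcases lt_or_gt_of_ne hj with h | h
          · rw [hΥlt j b h, tz2]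
          · have hj' : b.val < j.val := h
            rw [ih a j (hab.trans h) (by omega), tz1]
        · intro h; exact absurd (Finset.mem_univ b) h
      have hR : ∑ j, twMul q (Υ' a j) (V j b) = twMul q (ψ' a.rev) (V a b) := by
        rw [Finset.sum_eq_single a]
        · rw [hΥ'diag a]
        · intro j _ hj
          rcases lt_or_gt_of_ne hj with h | h
          · have hj' : j.val < a.val := h
            rw [ih j b (h.trans hab) (by omega), tz2]
          · rw [hΥ'lt a j h, tz1]
        · intro h; exact absurd (Finset.mem_univ a) h
      have heq := hentry a b
      rw [hL, hR] at heq
      exact hnoniso b.rev a.rev (fun h => hab.ne' (Fin.rev_injective h)) _ heq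
  have hupper : ∀ a b : Fin n, a < b → V a b = 0 := by
    intro a b hab
    exact key n a b hab (by omega)
  refine ⟨hupper, fun k => ?_⟩
  have heq := hentry k k
  rw [Finset.sum_eq_single k, Finset.sum_eq_single k] at heq
  · rwa [hΥdiag k, hΥ'diag k] at heq
  · intro j _ hj
    rcases lt_or_gt_of_ne hj with h | h
    · rw [hupper j k h, tz2]
    · rw [hΥ'lt k j h, tz1]
  · intro h; exact absurd (Finset.mem_univ k) h
  · intro j _ hj
    rcases lt_or_gt_of_ne hj with h | h
    · rw [hΥlt j k h, tz2]
    · rw [hupper k j h, tz1]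
  · intro h; exact absurd (Finset.mem_univ k) h
end
end

section
/- Let L be an algebraically closed A-field and let Υ, Υ̂ be triangular t-modules of the same dimension n over L, with diagonal Drinfeld modules ψ_1,…,ψ_n and ψ̂_1,…,ψ̂_n. Let U ∈ Mat_n(L{τ}) be a triangular morphism Υ → Υ̂ (U lower triangular, U·Υ_t = Υ̂_t·U), with diagonal entries u_k := U_{k,k}. Then the induced 𝔽_q-linear map U : L^n → L^n is surjective with finite kernel (i.e. U is an isogeny) if and only if every diagonal entry u_k is nonzero (equivalently, each u_k is an isogeny of Drinfeld modules ψ_{n+1−k} → ψ̂_{n+1−k}). -/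
open Polynomial Matrix Finset

noncomputable section

/-- Evaluation of a twisted polynomial `Σᵢ aᵢτ^i` at `x`: `x ↦ Σᵢ aᵢ x^(q^i)`. -/
def twEval {K : Type*} [Field K] (q : ℕ) (f : Polynomial K) (x : K) : K :=
  f.sum fun i a => a * x ^ q ^ i

/-- Action of a matrix of twisted polynomials on `K^n`. -/
def twMatEval {K : Type*} [Field K] (q : ℕ) {α β : Type*} [Fintype β]
    (A : Matrix α β (Polynomial K)) (v : β → K) : α → K :=
  fun i => ∑ j, twEval q (A i j) (v j)


section lems
variable {L : Type*} [Field L] {q : ℕ}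

lemma twEval_zero_left (q : ℕ) (x : L) : twEval q (0 : Polynomial L) x = 0 := by
  simp [twEval]

lemma twEval_zero_right (hq : 2 ≤ q) (f : Polynomial L) : twEval q f 0 = 0 := by
  unfold twEval
  rw [Polynomial.sum_def]
  refine Finset.sum_eq_zero fun i _ => ?_
  rw [zero_pow (by positivity), mul_zero]

def twPoly (q : ℕ) (f : Polynomial L) : Polynomial L :=
  f.sum fun i a => Polynomial.C a * Polynomial.X ^ q ^ i

lemma twEval_eq (f : Polynomial L) (x : L) : twEval q f x = (twPoly q f).eval x := by
  unfold twEval twPoly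
  rw [Polynomial.sum_def, Polynomial.sum_def, Polynomial.eval_finset_sum]
  simp

lemma twPoly_coeff_zero (hq : 2 ≤ q) (f : Polynomial L) : (twPoly q f).coeff 0 = 0 := by
  unfold twPoly
  rw [Polynomial.sum_def, Polynomial.finset_sum_coeff]
  refine Finset.sum_eq_zero fun i _ => ?_
  rw [Polynomial.coeff_C_mul, Polynomial.coeff_X_pow, if_neg (by positivity), mul_zero]

lemma twPoly_ne_zero (hq : 2 ≤ q) {f : Polynomial L} (hf : f ≠ 0) : twPoly q f ≠ 0 := by
  intro h
  have h1 : (twPoly q f).coeff (q ^ f.natDegree) = f.coeff f.natDegree := by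
    unfold twPoly
    rw [Polynomial.sum_def, Polynomial.finset_sum_coeff]
    rw [Finset.sum_eq_single_of_mem f.natDegree (Polynomial.natDegree_mem_support_of_nonzero hf)]
    · rw [Polynomial.coeff_C_mul, Polynomial.coeff_X_pow, if_pos rfl, mul_one]
    · intro i _ hi
      rw [Polynomial.coeff_C_mul, Polynomial.coeff_X_pow,
        if_neg (fun hh => hi (Nat.pow_right_injective hq hh.symm)), mul_zero]
  rw [h, Polynomial.coeff_zero] at h1
  exact Polynomial.leadingCoeff_ne_zero.mpr hf h1.symm

lemma twPoly_natDegree_pos (hq : 2 ≤ q) {f : Polynomial L} (hf : f ≠ 0) :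
    0 < (twPoly q f).natDegree := by
  rcases Nat.eq_zero_or_pos (twPoly q f).natDegree with h | h
  · exfalso
    apply twPoly_ne_zero hq hf
    rw [Polynomial.eq_C_of_natDegree_eq_zero h, twPoly_coeff_zero hq, map_zero]
  · exact h

lemma twEval_surjective [IsAlgClosed L] (hq : 2 ≤ q) {f : Polynomial L} (hf : f ≠ 0) :
    Function.Surjective (twEval q f) := by
  intro y
  have hdeg : (twPoly q f - Polynomial.C y).degree ≠ 0 := by
    have : (twPoly q f - Polynomial.C y).natDegree ≠ 0 := by
      rw [Polynomial.natDegree_sub_C]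
      exact (twPoly_natDegree_pos hq hf).ne'
    exact_mod_cast Polynomial.degree_ne_of_natDegree_ne this
  obtain ⟨x, hx⟩ := IsAlgClosed.exists_root _ hdeg
  refine ⟨x, ?_⟩
  rw [twEval_eq]
  have := hx
  rw [Polynomial.IsRoot, Polynomial.eval_sub, Polynomial.eval_C, sub_eq_zero] at this
  exact this

lemma twEval_fiber_finite (hq : 2 ≤ q) {f : Polynomial L} (hf : f ≠ 0) (c : L) :
    {x : L | twEval q f x = c}.Finite := by
  have hne : twPoly q f - Polynomial.C c ≠ 0 := by
    intro h
    have := twPoly_natDegree_pos hq hf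
    rw [sub_eq_zero] at h
    rw [h, Polynomial.natDegree_C] at this
    exact lt_irrefl 0 this
  refine Set.Finite.subset (Polynomial.finite_setOf_isRoot hne) fun x hx => ?_
  simp only [Set.mem_setOf_eq, twEval_eq] at hx ⊢
  rw [Polynomial.IsRoot, Polynomial.eval_sub, Polynomial.eval_C, hx, sub_self]

end lems

lemma main_induction {L : Type*} [Field L] [IsAlgClosed L] {q : ℕ} (hq : 2 ≤ q) :
    ∀ (n : ℕ) (U : Matrix (Fin n) (Fin n) (Polynomial L)),
    (∀ a b : Fin n, a < b → U a b = 0) →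
    ((Function.Surjective (twMatEval q U) ∧
        {v : Fin n → L | twMatEval q U v = 0}.Finite) ↔ ∀ k : Fin n, U k k ≠ 0) := by
  intro n
  induction n with
  | zero =>
      intro U _
      constructor
      · intro _ k
        exact Fin.elim0 k
      · intro _
        refine ⟨fun w => ⟨w, funext fun i => Fin.elim0 i⟩, Set.toFinite _⟩
  | succ n ih =>
      intro U hTri
      set U' : Matrix (Fin n) (Fin n) (Polynomial L) :=
        U.submatrix Fin.castSucc Fin.castSucc with hU'
      have hTri' : ∀ a b : Fin n, a < b → U' a b = 0 := fun a b hab =>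
        hTri _ _ (by simpa using hab)
      set u : Polynomial L := U (Fin.last n) (Fin.last n) with hu_def
      set c : (Fin n → L) → L :=
        fun v' => ∑ j : Fin n, twEval q (U (Fin.last n) j.castSucc) (v' j) with hc
      -- key computations
      have key : ∀ (v : Fin (n + 1) → L) (i : Fin n),
          twMatEval q U v i.castSucc = twMatEval q U' (v ∘ Fin.castSucc) i := by
        intro v i
        unfold twMatEval
        rw [Fin.sum_univ_castSucc]
        rw [hTri _ _ (Fin.castSucc_lt_last i), twEval_zero_left, add_zero]
        rfl
      have keyLast : ∀ v : Fin (n + 1) → L,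
          twMatEval q U v (Fin.last n) = c (v ∘ Fin.castSucc) + twEval q u (v (Fin.last n)) := by
        intro v
        unfold twMatEval
        rw [Fin.sum_univ_castSucc]
        rfl
      constructor
      · -- surjective + finite kernel → diagonal nonzero
        rintro ⟨hsurj, hfin⟩
        -- u ≠ 0
        have hu : u ≠ 0 := by
          intro h0
          have hmem : ∀ t : L, (Fin.snoc (0 : Fin n → L) t : Fin (n + 1) → L) ∈
              {v : Fin (n + 1) → L | twMatEval q U v = 0} := by
            intro t
            have hinit : (Fin.snoc (0 : Fin n → L) t : Fin (n + 1) → L) ∘ Fin.castSucc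
                = (0 : Fin n → L) := by
              funext j; simp [Fin.snoc_castSucc]
            funext i
            simp only [Set.mem_setOf_eq, Pi.zero_apply]
            refine Fin.lastCases ?_ ?_ i
            · rw [keyLast, hinit, Fin.snoc_last, h0, twEval_zero_left, add_zero]
              simp only [hc]
              exact Finset.sum_eq_zero fun j _ => twEval_zero_right hq _
            · intro i
              rw [key, hinit]
              exact Finset.sum_eq_zero fun j _ => twEval_zero_right hq _
          have hinj : Function.Injective
              fun t : L => (Fin.snoc (0 : Fin n → L) t : Fin (n + 1) → L) := by
            intro a b hab
            have := congrFun hab (Fin.last n)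
            simpa [Fin.snoc_last] using this
          exact (Set.infinite_of_injective_forall_mem hinj hmem) hfin
        -- U' surjective
        have hsurj' : Function.Surjective (twMatEval q U') := by
          intro w'
          obtain ⟨v, hv⟩ := hsurj (Fin.snoc w' 0)
          refine ⟨v ∘ Fin.castSucc, funext fun i => ?_⟩
          rw [← key v i, hv, Fin.snoc_castSucc]
        -- kernel of U' finite
        have hfin' : {v' : Fin n → L | twMatEval q U' v' = 0}.Finite := by
          have hsu := twEval_surjective hq hu
          set g : (Fin n → L) → (Fin (n + 1) → L) :=
            fun v' => Fin.snoc v' (hsu (-c v')).choose with hg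
          have hgspec : ∀ v', twEval q u (g v' (Fin.last n)) = -c v' := by
            intro v'
            simp only [hg, Fin.snoc_last]
            exact (hsu (-c v')).choose_spec
          have himg : g '' {v' : Fin n → L | twMatEval q U' v' = 0} ⊆
              {v : Fin (n + 1) → L | twMatEval q U v = 0} := by
            rintro _ ⟨v', hv', rfl⟩
            have hinit : (g v') ∘ Fin.castSucc = v' := by
              funext j; simp [hg, Fin.snoc_castSucc]
            funext i
            simp only [Pi.zero_apply]
            refine Fin.lastCases ?_ ?_ i
            · rw [keyLast, hinit, hgspec, add_neg_cancel]
            · intro i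
              rw [key, hinit]
              simpa using congrFun hv' i
          refine Set.Finite.of_finite_image (Set.Finite.subset hfin himg) ?_
          intro a _ b _ hab
          have : (g a) ∘ Fin.castSucc = (g b) ∘ Fin.castSucc := by rw [hab]
          funext j
          have := congrFun this j
          simpa [hg, Fin.snoc_castSucc] using this
        have hdiag' := (ih U' hTri').mp ⟨hsurj', hfin'⟩
        intro k
        refine Fin.lastCases ?_ ?_ k
        · exact hu
        · intro i
          exact hdiag' i
      · -- diagonal nonzero → surjective + finite kernel
        intro hdiag
        have hu : u ≠ 0 := hdiag (Fin.last n)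
        have hdiag' : ∀ k : Fin n, U' k k ≠ 0 := fun k => hdiag k.castSucc
        obtain ⟨hsurj', hfin'⟩ := (ih U' hTri').mpr hdiag'
        constructor
        · intro w
          obtain ⟨v', hv'⟩ := hsurj' (w ∘ Fin.castSucc)
          obtain ⟨t, ht⟩ := twEval_surjective hq hu (w (Fin.last n) - c v')
          refine ⟨Fin.snoc v' t, funext fun i => ?_⟩
          have hinit : (Fin.snoc v' t) ∘ Fin.castSucc = v' := by
            funext j; simp [Fin.snoc_castSucc]
          refine Fin.lastCases ?_ ?_ i
          · rw [keyLast, hinit, Fin.snoc_last, ht, add_sub_cancel]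
          · intro i
            rw [key, hinit]
            exact congrFun hv' i
        · -- finite kernel
          have hsub : {v : Fin (n + 1) → L | twMatEval q U v = 0} ⊆
              ⋃ v' ∈ {v' : Fin n → L | twMatEval q U' v' = 0},
                (fun t => Fin.snoc v' t) '' {t : L | twEval q u t = -c v'} := by
            intro v hv
            have hv' : twMatEval q U' (v ∘ Fin.castSucc) = 0 := by
              funext i
              simp only [Pi.zero_apply]
              rw [← key v i]
              simpa using congrFun hv i.castSucc
            have hlast : twEval q u (v (Fin.last n)) = -c (v ∘ Fin.castSucc) := by
              have h1 := congrFun hv (Fin.last n)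
              rw [keyLast] at h1
              simp only [Pi.zero_apply] at h1
              exact eq_neg_of_add_eq_zero_right h1
            refine Set.mem_biUnion hv' ⟨v (Fin.last n), hlast, ?_⟩
            exact Fin.snoc_init_self v
          refine Set.Finite.subset (Set.Finite.biUnion hfin' fun v' _ => ?_) hsub
          exact Set.Finite.image _ (twEval_fiber_finite hq hu (-c v'))

/-- characterization of triangular isogenies.
Over an algebraically closed `A`-field `L`, a triangular morphism `U : Υ → Υ̂` of
triangular t-modules induces a surjective map `L^n → L^n` with finite kernel (i.e. `U`
is an isogeny) if and only if every diagonal entry `U k k` is nonzero (equivalently,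
each `U k k` is an isogeny of Drinfeld modules `ψ_{k.rev} → ψ̂_{k.rev}`). -/
theorem triangular_isogeny_characterisation
    {L : Type*} [Field L] [IsAlgClosed L] (p s q : ℕ) [Fact p.Prime]
    (hs : 0 < s) (hq : q = p ^ s) [Algebra (GaloisField p s) L] (θ : L) {n : ℕ}
    (Υ : Matrix (Fin n) (Fin n) (Polynomial L))
    (ψ : Fin n → Polynomial L) (r : Fin n → ℕ)
    (hΥ : IsTriangular θ Υ ψ r)
    (Υ' : Matrix (Fin n) (Fin n) (Polynomial L))
    (ψ' : Fin n → Polynomial L) (r' : Fin n → ℕ)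
    (hΥ' : IsTriangular θ Υ' ψ' r')
    (U : Matrix (Fin n) (Fin n) (Polynomial L))
    (hTri : ∀ a b : Fin n, a < b → U a b = 0)
    (hMor : twMatMul q U Υ = twMatMul q Υ' U) :
    (Function.Surjective (twMatEval q U) ∧
        {v : Fin n → L | twMatEval q U v = 0}.Finite) ↔
      ∀ k : Fin n, U k k ≠ 0 := by
  have hq2 : 2 ≤ q := by
    have hp : 2 ≤ p := (Fact.out : p.Prime).two_le
    calc 2 ≤ p := hp
      _ ≤ p ^ s := Nat.le_self_pow hs.ne' p
      _ = q := hq.symm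
  exact main_induction hq2 n U hTri
end
end

section
/- Let K be an A-field of A-characteristic zero, let K^sep be a separable closure of K, and let Υ be a triangular t-module of dimension n defined over K whose diagonal Drinfeld modules ψ_1,…,ψ_n have pairwise distinct ranks. If U ∈ Mat_n(K^sep{τ}) is an endomorphism of Υ over K^sep (i.e. U·Υ_t = Υ_t·U) such that every constant term of every entry of U lies in K (∂U ∈ Mat_n(K)), then every coefficient of every entry of U lies in K, i.e. U ∈ Mat_n(K{τ}) and U is an endomorphism of Υ over K. -/
open Polynomial Matrix Finset

noncomputable section

lemma twMul_coeff {K : Type*} [Field K] {q : ℕ} (hq : 0 < q) (f g : Polynomial K) (m : ℕ) :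
    (twMul q f g).coeff m = ∑ i ∈ Finset.range (m+1), f.coeff i * g.coeff (m - i) ^ q ^ i := by
  have key : ∀ (s : Finset ℕ) (G : ℕ → K), (∀ i, i ∉ s → G i = 0) → (∀ i, m < i → G i = 0) →
      ∑ i ∈ s, G i = ∑ i ∈ Finset.range (m+1), G i := by
    intro s G h1 h2
    rw [← Finset.sum_inter_add_sum_sdiff s (Finset.range (m+1)) G,
        ← Finset.sum_inter_add_sum_sdiff (Finset.range (m+1)) s G]
    have e1 : ∑ i ∈ s \ Finset.range (m+1), G i = 0 :=
      Finset.sum_eq_zero fun i hi => h2 i (by simpa using (Finset.mem_sdiff.mp hi).2)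
    have e2 : ∑ i ∈ Finset.range (m+1) \ s, G i = 0 :=
      Finset.sum_eq_zero fun i hi => h1 i (Finset.mem_sdiff.mp hi).2
    rw [e1, e2, Finset.inter_comm]
  rw [twMul, Polynomial.sum_def, Polynomial.finset_sum_coeff]
  have inner : ∀ i a, ((g.sum fun j b => Polynomial.C (a * b ^ q ^ i) * Polynomial.X ^ (i + j)).coeff m)
      = if i ≤ m then a * g.coeff (m - i) ^ q ^ i else 0 := by
    intro i a
    rw [Polynomial.sum_def, Polynomial.finset_sum_coeff]
    simp only [Polynomial.coeff_C_mul, Polynomial.coeff_X_pow, mul_ite, mul_one, mul_zero]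
    rw [key g.support _ ?_ ?_]
    · rcases le_or_gt i m with h | h
      · rw [Finset.sum_eq_single (m - i)]
        · simp [h, Nat.add_sub_cancel' h]
        · intro j _ hj
          rw [if_neg]; omega
        · intro hmem; simp at hmem
      · rw [if_neg (by omega)]
        apply Finset.sum_eq_zero
        intro j _
        rw [if_neg (by omega)]
    · intro j hj
      simp [Polynomial.notMem_support_iff.mp hj, zero_pow (pow_pos hq i).ne']
    · intro j hj
      rw [if_neg (by omega)]
  simp only [inner]
  rw [key f.support _ ?_ ?_]
  · apply Finset.sum_congr rfl
    intro i hi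
    rw [if_pos (by simp at hi; omega)]
  · intro i hi
    split <;> simp [Polynomial.notMem_support_iff.mp hi]
  · intro i hi
    rw [if_neg (by omega)]

lemma twMatMul_coeff {K : Type*} [Field K] {q : ℕ} (hq : 0 < q) {n : ℕ}
    (A B : Matrix (Fin n) (Fin n) (Polynomial K)) (a b : Fin n) (m : ℕ) :
    ((twMatMul q A B) a b).coeff m
      = ∑ c, ∑ i ∈ Finset.range (m+1), (A a c).coeff i * (B c b).coeff (m - i) ^ q ^ i := by
  rw [twMatMul, Matrix.of_apply, Polynomial.finset_sum_coeff]
  exact Finset.sum_congr rfl fun c _ => twMul_coeff hq _ _ m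


/-- descent of endomorphisms from the separable closure.
Let `K` have `A`-characteristic zero and let `Υ` be a triangular t-module over `K` whose
diagonal Drinfeld modules have pairwise distinct ranks.  If `U` is an endomorphism of
`Υ` over a separable closure `Ksep` of `K` all of whose entries have constant term in
`K`, then every coefficient of every entry of `U` lies in `K`, i.e. `U` is an
endomorphism of `Υ` over `K`. -/
theorem endomorphism_descends_to_K
    {K : Type*} [Field K] (p s q : ℕ) [Fact p.Prime] (hs : 0 < s) (hq : q = p ^ s)
    [Algebra (GaloisField p s) K] (θ : K)
    (hθ : Transcendental (GaloisField p s) θ) {n : ℕ}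
    (Υ : Matrix (Fin n) (Fin n) (Polynomial K))
    (ψ : Fin n → Polynomial K) (r : Fin n → ℕ)
    (hΥ : IsTriangular θ Υ ψ r)
    (hrk : ∀ i j : Fin n, i ≠ j → r i ≠ r j)
    (Ksep : Type*) [Field Ksep] [Algebra K Ksep] [IsSepClosure K Ksep]
    (U : Matrix (Fin n) (Fin n) (Polynomial Ksep))
    (hU : twMatMul q U (Υ.map (Polynomial.map (algebraMap K Ksep)))
        = twMatMul q (Υ.map (Polynomial.map (algebraMap K Ksep))) U)
    (h0 : ∀ a b : Fin n, (U a b).coeff 0 ∈ (algebraMap K Ksep).range) :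
    ∀ (a b : Fin n) (k : ℕ), (U a b).coeff k ∈ (algebraMap K Ksep).range := by
  obtain ⟨hlow, hdiag, hdrin⟩ := hΥ
  set Υ' : Matrix (Fin n) (Fin n) (Polynomial Ksep) :=
    Υ.map (Polynomial.map (algebraMap K Ksep)) with hΥ'def
  set S : Subfield Ksep := (algebraMap K Ksep).fieldRange with hSdef
  set θ' : Ksep := algebraMap K Ksep θ with hθ'def
  have hq2 : 2 ≤ q := by
    subst hq
    calc 2 ≤ p := (Fact.out (p := p.Prime)).two_le
    _ ≤ p ^ s := Nat.le_self_pow hs.ne' p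
  have hqpos : 0 < q := by omega
  have hSmem : ∀ x : K, algebraMap K Ksep x ∈ S := fun x => ⟨x, rfl⟩
  have hSrange : ∀ x : Ksep, x ∈ S → x ∈ (algebraMap K Ksep).range := fun x hx => hx
  have h0S : ∀ a b : Fin n, (U a b).coeff 0 ∈ S := fun a b => h0 a b
  have hΥS : ∀ (x y : Fin n) (k : ℕ), (Υ' x y).coeff k ∈ S := by
    intro x y k
    simp only [hΥ'def, Matrix.map_apply, Polynomial.coeff_map]
    exact hSmem _
  have hdiag0 : ∀ c : Fin n, (Υ' c c).coeff 0 = θ' := by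
    intro c
    simp only [hΥ'def, Matrix.map_apply, Polynomial.coeff_map, hdiag c]
    rw [(hdrin c.rev).2.1]
  have hlow' : ∀ i j : Fin n, i < j → Υ' i j = 0 := by
    intro i j hij
    simp [hΥ'def, Matrix.map_apply, hlow i j hij]
  have hne : ∀ m : ℕ, 0 < m → θ' ^ q ^ m - θ' ≠ 0 := by
    intro m hm
    have hqm : 2 ≤ q ^ m := le_trans hq2 (Nat.le_self_pow hm.ne' q)
    have hKθ : θ ^ q ^ m - θ ≠ 0 := by
      intro h
      apply hθ
      refine ⟨Polynomial.X ^ q ^ m - Polynomial.X, ?_, ?_⟩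
      · intro hzero
        have := congrArg (fun P => Polynomial.coeff P 1) hzero
        simp only [Polynomial.coeff_sub, Polynomial.coeff_X_pow, Polynomial.coeff_X_one,
          Polynomial.coeff_zero] at this
        rw [if_neg (by omega)] at this
        simp at this
      · simp only [map_sub, map_pow, Polynomial.aeval_X]
        exact h
    intro h
    apply hKθ
    apply (algebraMap K Ksep).injective
    rw [map_sub, map_pow, map_zero]
    exact h
  have main : ∀ m d (a b : Fin n), (a : ℕ) + (n - 1 - (b : ℕ)) ≤ d → (U a b).coeff m ∈ S := by
    intro m
    induction m using Nat.strong_induction_on with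
    | _ m ihm =>
    intro d
    induction d using Nat.strong_induction_on with
    | _ d ihd =>
    intro a b hab
    rcases Nat.eq_zero_or_pos m with hm | hm
    · subst hm; exact h0S a b
    have hE : ∑ c, ∑ i ∈ Finset.range (m+1), (U a c).coeff i * (Υ' c b).coeff (m - i) ^ q ^ i
        = ∑ c, ∑ i ∈ Finset.range (m+1), (Υ' a c).coeff i * (U c b).coeff (m - i) ^ q ^ i := by
      have := congrArg (fun M : Matrix (Fin n) (Fin n) (Polynomial Ksep) => (M a b).coeff m) hU
      simpa only [twMatMul_coeff hqpos] using this
    obtain ⟨EL, hELmem, hEL⟩ :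
        ∃ x ∈ S, (∑ c, ∑ i ∈ Finset.range (m+1),
            (U a c).coeff i * (Υ' c b).coeff (m - i) ^ q ^ i)
          = (U a b).coeff m * θ' ^ q ^ m + x := by
      refine ⟨(∑ c, ∑ i ∈ Finset.range m, (U a c).coeff i * (Υ' c b).coeff (m - i) ^ q ^ i)
        + ∑ c ∈ Finset.univ.erase b, (U a c).coeff m * (Υ' c b).coeff 0 ^ q ^ m, ?_, ?_⟩
      · refine S.add_mem (S.sum_mem fun c _ => S.sum_mem fun i hi => ?_)
          (S.sum_mem fun c hc => ?_)
        · exact S.mul_mem (ihm i (Finset.mem_range.mp hi) _ a c le_rfl)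
            (S.pow_mem (hΥS c b (m - i)) _)
        · have hcb : c ≠ b := (Finset.mem_erase.mp hc).1
          rcases lt_or_gt_of_ne hcb with hlt | hgt
          · rw [hlow' c b hlt]
            simp only [Polynomial.coeff_zero, zero_pow (pow_pos hqpos m).ne', mul_zero]
            exact S.zero_mem
          · refine S.mul_mem (ihd (d - 1) ?_ a c ?_) (S.pow_mem (hΥS c b 0) _)
            · have : (b : ℕ) < (c : ℕ) := hgt
              have := c.isLt
              omega
            · have : (b : ℕ) < (c : ℕ) := hgt
              have := c.isLt
              omega
      · have hsplit : ∑ x : Fin n, (U a x).coeff m * (Υ' x b).coeff 0 ^ q ^ m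
            = (U a b).coeff m * θ' ^ q ^ m
              + ∑ x ∈ Finset.univ.erase b, (U a x).coeff m * (Υ' x b).coeff 0 ^ q ^ m := by
          rw [← Finset.add_sum_erase _
            (fun x => (U a x).coeff m * (Υ' x b).coeff 0 ^ q ^ m) (Finset.mem_univ b),
            hdiag0 b]
        simp only [Finset.sum_range_succ, Nat.sub_self, Finset.sum_add_distrib]
        rw [hsplit]
        ring
    obtain ⟨ER, hERmem, hER⟩ :
        ∃ x ∈ S, (∑ c, ∑ i ∈ Finset.range (m+1),
            (Υ' a c).coeff i * (U c b).coeff (m - i) ^ q ^ i)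
          = θ' * (U a b).coeff m + x := by
      refine ⟨(∑ c, ∑ i ∈ Finset.range m, (Υ' a c).coeff (i+1) * (U c b).coeff (m - (i+1)) ^ q ^ (i+1))
        + ∑ c ∈ Finset.univ.erase a, (Υ' a c).coeff 0 * (U c b).coeff m, ?_, ?_⟩
      · refine S.add_mem (S.sum_mem fun c _ => S.sum_mem fun i hi => ?_)
          (S.sum_mem fun c hc => ?_)
        · refine S.mul_mem (hΥS a c (i+1)) (S.pow_mem (ihm (m - (i+1)) (by omega) _ c b le_rfl) _)
        · have hca : c ≠ a := (Finset.mem_erase.mp hc).1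
          rcases lt_or_gt_of_ne hca with hlt | hgt
          · refine S.mul_mem (hΥS a c 0) (ihd (d - 1) ?_ c b ?_)
            · have : (c : ℕ) < (a : ℕ) := hlt
              omega
            · have : (c : ℕ) < (a : ℕ) := hlt
              omega
          · rw [hlow' a c hgt]
            simp only [Polynomial.coeff_zero, zero_mul]
            exact S.zero_mem
      · have hsplit : ∑ x : Fin n, (Υ' a x).coeff 0 * (U x b).coeff m
            = θ' * (U a b).coeff m
              + ∑ x ∈ Finset.univ.erase a, (Υ' a x).coeff 0 * (U x b).coeff m := by
          rw [← Finset.add_sum_erase _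
            (fun x => (Υ' a x).coeff 0 * (U x b).coeff m) (Finset.mem_univ a),
            hdiag0 a]
        simp only [Finset.sum_range_succ', Nat.sub_zero, pow_zero, pow_one,
          Finset.sum_add_distrib]
        rw [hsplit]
        ring
    have hukey : (θ' ^ q ^ m - θ') * (U a b).coeff m = ER - EL := by
      have h2 : (U a b).coeff m * θ' ^ q ^ m + EL = θ' * (U a b).coeff m + ER :=
        hEL.symm.trans (hE.trans hER)
      linear_combination h2
    have hmemc : θ' ^ q ^ m - θ' ∈ S := S.sub_mem (S.pow_mem (hSmem θ) _) (hSmem θ)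
    have hmemprod : (θ' ^ q ^ m - θ') * (U a b).coeff m ∈ S := by
      rw [hukey]; exact S.sub_mem hERmem hELmem
    have := S.mul_mem (S.inv_mem hmemc) hmemprod
    rwa [inv_mul_cancel_left₀ (hne m hm)] at this
  intro a b k
  exact hSrange _ (main k ((a : ℕ) + (n - 1 - (b : ℕ))) a b le_rfl)
end
end
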